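/- arXiv:2102.10940 — 4 statements merged into one kernel-verified Lean document; each statement's English description precedes it below -/
import Mathlib

section
/- For any forest F on vertex set {1,…,n} and any ε > 0 with εn an integer, there is an ordering (relabeling) of the vertices of F such that every vertex i with i ≤ εn has at most one neighbor among {1,…,i−1}, and every vertex i with i > εn has degree at most 2/ε in F. -/
/-!
Forests are 1-degenerate: an endpoint of a longest path has at most one neighbour, and induced
subgraphs of forests are forests. Repeatedly moving such a leaf of a vertex set `T` to the last
free position orders `T` so that every vertex has at most one earlier neighbour. For `T` the whole
vertex set, counting each edge at its later endpoint bounds the degree sum by `2n`, so at most `εn`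
vertices have degree above `2 / ε`; placing a set of `εn` vertices containing all of them first,
ordered in this way, gives the relabeling.
-/

open Finset

theorem Equiv.symm_apply_lt_iff_of_forall_lt_apply_eq {ι α : Type*} [LT ι] {σ τ : ι ≃ α}
    {i : ι} (h : ∀ j < i, σ j = τ j) (a : α) : σ.symm a < i ↔ τ.symm a < i := by
  have key : ∀ {σ' τ' : ι ≃ α}, (∀ j < i, σ' j = τ' j) → σ'.symm a < i → τ'.symm a < i :=
    fun {σ' τ'} h ha => by rwa [← σ'.apply_symm_apply a, h _ ha, τ'.symm_apply_apply]
  exact ⟨key h, key fun j hj => (h j hj).symm⟩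

theorem exists_equiv_fin_prefix_insert {α : Type*} [DecidableEq α] {n : ℕ} {σ : Fin n ≃ α}
    {s : Finset α} (hs : ∀ i : Fin n, (i : ℕ) < #s ↔ σ i ∈ s) {a : α} (ha : a ∉ s) (p : Fin n)
    (hp : (p : ℕ) = #s) :
    ∃ τ : Fin n ≃ α, τ p = a ∧ (∀ i : Fin n, (i : ℕ) < #s → τ i = σ i) ∧
      ∀ i : Fin n, (i : ℕ) ≤ #s ↔ τ i ∈ insert a s := by
  let τ := σ.trans (Equiv.swap (σ p) a)
  have hτp : τ p = a := Equiv.swap_apply_left _ _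
  have hτ_lt : ∀ i : Fin n, (i : ℕ) < #s → τ i = σ i := fun i hi =>
    Equiv.swap_apply_of_ne_of_ne (σ.injective.ne (Fin.ne_of_val_ne (by omega)))
      (ne_of_mem_of_not_mem ((hs i).1 hi) ha)
  refine ⟨τ, hτp, hτ_lt, fun i => ⟨fun hi => ?_, fun hi => ?_⟩⟩
  · rcases hi.lt_or_eq with hi | hi
    · exact mem_insert_of_mem (hτ_lt i hi ▸ (hs i).1 hi)
    · rw [show i = p from Fin.ext (hi.trans hp.symm), hτp]
      exact mem_insert_self a s
  · rcases mem_insert.1 hi with hia | his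
    · rw [τ.injective (hia.trans hτp.symm), hp]
    · set k := σ.symm (τ i)
      have hk : (k : ℕ) < #s := (hs k).2 (by rwa [σ.apply_symm_apply])
      have hτk : τ k = τ i := by rw [hτ_lt k hk, σ.apply_symm_apply]
      rw [← τ.injective hτk]
      exact hk.le

namespace SimpleGraph

variable {V : Type*} [Fintype V] {G : SimpleGraph V} [DecidableRel G.Adj]

theorem IsAcyclic.exists_degree_le_one [Nonempty V] (hG : G.IsAcyclic) : ∃ v, G.degree v ≤ 1 := by
  obtain ⟨u, _, p, hp, hmax⟩ := Walk.exists_isPath_forall_isPath_length_le_length G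
  refine ⟨u, card_le_one_iff_subset_singleton.2 ⟨p.snd, fun w hw => ?_⟩⟩
  rw [mem_neighborFinset] at hw
  have hsupp : w ∈ p.support := by
    by_contra h
    simpa using hmax _ _ (p.cons hw.symm) (hp.cons h)
  exact mem_singleton.2 (hG.eq_snd_of_adj_start hp hw hsupp)

theorem IsAcyclic.exists_mem_card_neighborFinset_inter_le_one [DecidableEq V] (hG : G.IsAcyclic)
    {T : Finset V} (hT : T.Nonempty) : ∃ w ∈ T, #(G.neighborFinset w ∩ T) ≤ 1 := by
  have : Nonempty T := hT.to_subtype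
  obtain ⟨w, hw⟩ := (hG.induce (T : Set V)).exists_degree_le_one
  refine ⟨w, w.2, ?_⟩
  have : G.neighborFinset w ∩ T =
      ((G.induce (T : Set V)).neighborFinset w).map (Function.Embedding.subtype _) := by
    ext v
    simp
  rwa [this, card_map]

variable {n : ℕ}

def earlierNeighborFinset (G : SimpleGraph V) [DecidableRel G.Adj] (σ : Fin n ≃ V) (i : Fin n) :
    Finset V :=
  {v ∈ G.neighborFinset (σ i) | σ.symm v < i}

theorem IsAcyclic.exists_equiv_fin_card_earlierNeighborFinset_le_one (hG : G.IsAcyclic)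
    (hn : Fintype.card V = n) (T : Finset V) :
    ∃ σ : Fin n ≃ V, (∀ i : Fin n, (i : ℕ) < #T ↔ σ i ∈ T) ∧
      ∀ i : Fin n, (i : ℕ) < #T → #(G.earlierNeighborFinset σ i) ≤ 1 := by
  classical
  induction T using Finset.strongInduction with
  | H T ih =>
  rcases T.eq_empty_or_nonempty with rfl | hT
  · exact ⟨(Fintype.equivFinOfCardEq hn).symm, by simp, by simp⟩
  obtain ⟨w, hwT, hw⟩ := hG.exists_mem_card_neighborFinset_inter_le_one hT
  obtain ⟨σ', hmem', hearlier'⟩ := ih (T.erase w) (erase_ssubset hwT)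
  have hcard : #T = #(T.erase w) + 1 := (card_erase_add_one hwT).symm
  have hTn : #T ≤ n := hn ▸ card_le_univ T
  let p : Fin n := ⟨#(T.erase w), by omega⟩
  obtain ⟨σ, hσp, hσ_lt, hmem⟩ := exists_equiv_fin_prefix_insert hmem' (notMem_erase w T) p rfl
  rw [insert_erase hwT] at hmem
  refine ⟨σ, fun i => by rw [hcard, Nat.lt_succ_iff]; exact hmem i, fun i hi => ?_⟩
  by_cases hip : (i : ℕ) < #(T.erase w)
  · have : G.earlierNeighborFinset σ i = G.earlierNeighborFinset σ' i := by
      rw [earlierNeighborFinset, earlierNeighborFinset, hσ_lt i hip]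
      exact filter_congr fun v _ => Equiv.symm_apply_lt_iff_of_forall_lt_apply_eq
        (fun j hj => hσ_lt j (lt_trans hj hip)) v
    exact this ▸ hearlier' i hip
  · rw [show i = p from Fin.ext (by simp [p]; omega)]
    refine (card_le_card fun v hv => ?_).trans hw
    rw [earlierNeighborFinset, mem_filter, hσp] at hv
    exact mem_inter.2 ⟨hv.1, σ.apply_symm_apply v ▸ (hmem _).1 hv.2.le⟩

theorem sum_degree_eq_two_mul_sum_card_filter_lt {α : Type*} [LinearOrder α] {f : V → α}
    (hf : Function.Injective f) :
    ∑ v, G.degree v = 2 * ∑ v, #{u ∈ G.neighborFinset v | f u < f v} := by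
  have hsplit : ∀ v, G.degree v =
      #{u ∈ G.neighborFinset v | f u < f v} + #{u ∈ G.neighborFinset v | f v < f u} := by
    intro v
    rw [← card_neighborFinset_eq_degree,
      ← card_filter_add_card_filter_not (s := G.neighborFinset v) (fun u => f u < f v)]
    congr 1
    refine congrArg card (filter_congr fun u hu => ?_)
    have : f v ≠ f u := hf.ne (G.ne_of_adj ((G.mem_neighborFinset v u).1 hu))
    rw [not_lt, le_iff_lt_or_eq, or_iff_left this]
  have hswap : ∑ v, #{u ∈ G.neighborFinset v | f v < f u} =
      ∑ v, #{u ∈ G.neighborFinset v | f u < f v} := by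
    simpa [bipartiteAbove, bipartiteBelow, neighborFinset_eq_filter, filter_filter, G.adj_comm]
      using sum_card_bipartiteAbove_eq_sum_card_bipartiteBelow
        (s := univ) (t := univ) (r := fun a b => G.Adj a b ∧ f a < f b)
  rw [sum_congr rfl fun v _ => hsplit v, sum_add_distrib, hswap]
  ring

theorem IsAcyclic.sum_degree_le_two_mul_card (hG : G.IsAcyclic) :
    ∑ v, G.degree v ≤ 2 * Fintype.card V := by
  obtain ⟨σ, -, hσ⟩ := hG.exists_equiv_fin_card_earlierNeighborFinset_le_one rfl univ
  have hle : ∀ v, #{u ∈ G.neighborFinset v | σ.symm u < σ.symm v} ≤ 1 := fun v => by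
    have := hσ (σ.symm v) (by simp)
    rwa [earlierNeighborFinset, σ.apply_symm_apply] at this
  calc ∑ v, G.degree v = 2 * ∑ v, #{u ∈ G.neighborFinset v | σ.symm u < σ.symm v} :=
        sum_degree_eq_two_mul_sum_card_filter_lt σ.symm.injective
    _ ≤ 2 * ∑ _v : V, 1 := by gcongr with v; exact hle v
    _ = 2 * Fintype.card V := by simp

theorem IsAcyclic.card_filter_two_div_lt_degree_le (hG : G.IsAcyclic) {ε : ℝ} (hε : 0 < ε) :
    (#{v | 2 / ε < (G.degree v : ℝ)} : ℝ) ≤ ε * Fintype.card V := by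
  set B : Finset V := {v | 2 / ε < (G.degree v : ℝ)}
  have hB : (#B : ℝ) * (2 / ε) ≤ 2 * Fintype.card V :=
    calc (#B : ℝ) * (2 / ε) ≤ ∑ v ∈ B, (G.degree v : ℝ) := by
          rw [← nsmul_eq_mul]
          exact card_nsmul_le_sum _ _ _ fun v hv => (mem_filter.1 hv).2.le
      _ ≤ ∑ v, (G.degree v : ℝ) := sum_le_univ_sum_of_nonneg fun _ => Nat.cast_nonneg _
      _ ≤ 2 * Fintype.card V := by exact_mod_cast hG.sum_degree_le_two_mul_card
  calc (#B : ℝ) = #B * (2 / ε) * (ε / 2) := by field_simp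
    _ ≤ 2 * Fintype.card V * (ε / 2) := by gcongr
    _ = ε * Fintype.card V := by ring

end SimpleGraph

open SimpleGraph

/-- For any forest `F` on vertex set `{1, …, n}` and `ε > 0` with `εn` an integer, there is a
relabeling `σ` of the vertices such that every vertex `i` with `i ≤ εn` has at most one
neighbor among the earlier vertices, and every vertex `i` with `i > εn` has degree at
most `2/ε` in `F`. (Vertex `i ∈ {1, …, n}` corresponds to the index `i − 1` in `Fin n`,
and the vertex relabeled `i` is `σ i`.) -/
theorem forest_good_ordering (n : ℕ) (F : SimpleGraph (Fin n)) [DecidableRel F.Adj]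
    (hF : F.IsAcyclic) (ε : ℝ) (hε : 0 < ε) (m : ℕ) (hm : (m : ℝ) = ε * n) :
    ∃ σ : Equiv.Perm (Fin n),
      (∀ i : Fin n, ((i : ℕ) + 1 : ℝ) ≤ ε * n →
        ((F.neighborFinset (σ i)).filter (fun v => σ.symm v < i)).card ≤ 1)
      ∧ (∀ i : Fin n, ε * n < ((i : ℕ) + 1 : ℝ) → (F.degree (σ i) : ℝ) ≤ 2 / ε) := by
  set B : Finset (Fin n) := {v | 2 / ε < (F.degree v : ℝ)}
  have hBm : #B ≤ m := by
    have := hF.card_filter_two_div_lt_degree_le hε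
    rw [Fintype.card_fin, ← hm] at this
    exact_mod_cast this
  obtain ⟨T, hBT, hT⟩ := exists_superset_card_eq (n := min m n)
    (le_min hBm (card_le_univ B |>.trans_eq (Fintype.card_fin n)))
    (min_le_right m n |>.trans_eq (Fintype.card_fin n).symm)
  obtain ⟨σ, hmem, hearlier⟩ :=
    hF.exists_equiv_fin_card_earlierNeighborFinset_le_one (Fintype.card_fin n) T
  refine ⟨σ, fun i hi => hearlier i ?_, fun i hi => ?_⟩
  · have hi : (i : ℕ) + 1 ≤ m := by exact_mod_cast hm ▸ hi
    have := i.isLt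
    omega
  · have hi : m < (i : ℕ) + 1 := by exact_mod_cast hm ▸ hi
    have : σ i ∉ B := fun h => by have := (hmem i).2 (hBT h); omega
    simpa [B] using this
end

section
/- Let c : E(K_n) → {−1,1}, let F be a spanning forest of K_n, and fix distinct i_1,…,i_k ∈ {1,…,n}. Then E[c(E(F_π)) | (π(1),…,π(k)) = (i_1,…,i_k)] equals c(F_π[{i_1,…,i_k}]) + ∑_{j=1}^k \bar{c}({i_j ℓ : ℓ ∈ {1,…,n}\{i_1,…,i_k}}) · |N_F(j)\{1,…,k}| + \bar{c}(K_n − {i_1,…,i_k}) · m(F − {1,…,k}), where \bar{c}(E) denotes the average of c over an edge set E, c(F_π[{i_1,…,i_k}]) is the sum of c over edges π(u)π(v) with u,v ≤ k and uv ∈ E(F), and m(F − {1,…,k}) is the number of edges of F with both endpoints in {k+1,…,n}. -/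
/-!
Conditioned on `π(j) = i_j` for `j ≤ k`, the permutation `π` is a uniformly random extension of
the injection `j ↦ i_j`: there are `(n-k)!` such extensions, and under them the image of any
further vertex is uniform over the `n-k` unused vertices, while the image of an edge between two
further vertices is uniform over the `C(n-k, 2)` edges among unused vertices. By linearity of
expectation, sorting the edges of `F` by how many endpoints lie in `{1,…,k}` gives the three terms:
edges inside the prefix are mapped deterministically, an edge from `j` to a later vertex
contributes the average of `c` over the edges from `i_j` to unused vertices, and an edge between
two later vertices contributes the average of `c` over `K_n - {i_1,…,i_k}`.
-/

/-- The embedding of the already-fixed vertices: vertex `j` of `F` (index `j < k`) is sent to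
`i j`; other vertices are left alone (their images are irrelevant in the formula below). -/
def fixedEmb (n k : ℕ) (i : Fin k → Fin n) : Fin n → Fin n :=
  fun v => if h : (v : ℕ) < k then i ⟨v, h⟩ else v

open Finset Function Equiv
open scoped Nat

theorem Finset.sum_eq_sum_filter_add_sum_filter_add {β M : Type*} [AddCommMonoid M]
    (E : Finset β) (p q : β → Prop) [DecidablePred p] [DecidablePred q]
    (hpq : ∀ x ∈ E, ¬(p x ∧ q x)) (g : β → M) :
    ∑ x ∈ E, g x = ∑ x ∈ E with p x, g x + ∑ x ∈ E with q x, g x +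
      ∑ x ∈ E with ¬p x ∧ ¬q x, g x := by
  rw [← sum_filter_add_sum_filter_not E p, ← sum_filter_add_sum_filter_not {x ∈ E | ¬p x} q,
    filter_filter, filter_filter, add_assoc]
  congr 3
  exact filter_congr fun x hx => ⟨fun h => h.2, fun h => ⟨fun hp => hpq x hx ⟨hp, h⟩, h⟩⟩

theorem SimpleGraph.filter_edgeFinset_top_forall_mem {α : Type*} [Fintype α] [DecidableEq α]
    (B : Finset α) :
    {e ∈ (⊤ : SimpleGraph α).edgeFinset | ∀ v ∈ e, v ∈ B} = {e ∈ B.sym2 | ¬e.IsDiag} := by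
  ext e
  simp [mem_sym2_iff, and_comm]

theorem SimpleGraph.sum_edgeFinset_filter_crossing {n k : ℕ} (hk : k ≤ n)
    (G : SimpleGraph (Fin n)) [DecidableRel G.Adj] {M : Type*} [AddCommMonoid M]
    (g : Sym2 (Fin n) → M) :
    ∑ e ∈ G.edgeFinset with ¬(∀ v : Fin n, v ∈ e → (v : ℕ) < k) ∧
        ¬(∀ v : Fin n, v ∈ e → k ≤ (v : ℕ)), g e =
      ∑ j : Fin k, ∑ v ∈ G.neighborFinset (Fin.castLE hk j) with k ≤ v.val,
        g s(Fin.castLE hk j, v) := by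
  rw [sum_sigma']
  symm
  refine sum_bij (fun p _ => s(Fin.castLE hk p.1, p.2)) ?_ ?_ ?_ fun _ _ => rfl
  · rintro ⟨j, v⟩ hp
    simp only [mem_sigma, mem_filter, mem_neighborFinset] at hp
    have := j.isLt
    simp only [mem_filter, mem_edgeFinset, mem_edgeSet, Sym2.forall_mem_pair, Fin.val_castLE]
    exact ⟨hp.2.1, by omega, by omega⟩
  · rintro ⟨j, v⟩ hp ⟨j', v'⟩ hp' h
    simp only [mem_sigma, mem_filter] at hp hp'
    rcases Sym2.eq_iff.1 h with ⟨hj, rfl⟩ | ⟨hj, -⟩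
    · obtain rfl := Fin.castLE_injective hk hj
      rfl
    · have := j.isLt
      have : (v' : ℕ) = j := congrArg Fin.val hj.symm
      omega
  · intro e he
    induction e using Sym2.ind with
    | _ a b =>
      simp only [mem_filter, mem_edgeFinset, mem_edgeSet, Sym2.forall_mem_pair, not_and_or,
        not_lt, not_le] at he
      obtain ⟨hab, hlt, hge⟩ := he
      by_cases ha : (a : ℕ) < k
      · refine ⟨⟨⟨a, ha⟩, b⟩, ?_, rfl⟩
        simp only [mem_sigma, mem_univ, mem_filter, mem_neighborFinset, true_and]
        exact ⟨hab, by omega⟩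
      · refine ⟨⟨⟨b, by omega⟩, a⟩, ?_, Sym2.eq_swap⟩
        simp only [mem_sigma, mem_univ, mem_filter, mem_neighborFinset, true_and]
        exact ⟨hab.symm, by omega⟩

section PermsAgreeingOn

variable {α : Type*} [DecidableEq α] {s : Finset α} {f : α → α} {M : Type*} [AddCommMonoid M]

theorem injOn_insert_update {b : α} (hb : b ∉ s) (y : α) :
    Set.InjOn (update f b y) ↑(insert b s) ↔ Set.InjOn f s ∧ y ∉ s.image f := by
  have hupd : Set.EqOn (update f b y) f s := fun x hx =>
    update_of_ne (ne_of_mem_of_not_mem hx hb) y f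
  rw [coe_insert, Set.injOn_insert (mod_cast hb), update_self, hupd.injOn_iff,
    hupd.image_eq, ← coe_image, mem_coe]

theorem sum_sum_erase_sym2_mk (B : Finset α) (g : Sym2 α → M) :
    ∑ x ∈ B, ∑ y ∈ B.erase x, g s(x, y) = 2 • ∑ e ∈ B.sym2 with ¬e.IsDiag, g e := by
  have hmaps : ∀ p ∈ B.sigma (B.erase ·), s(p.1, p.2) ∈ {e ∈ B.sym2 | ¬e.IsDiag} := by
    rintro ⟨x, y⟩ hp
    simp only [mem_sigma, mem_erase] at hp
    simp [hp.1, hp.2.2, Ne.symm hp.2.1]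
  rw [sum_sigma', ← sum_fiberwise_of_maps_to hmaps, smul_sum]
  refine sum_congr rfl fun e he => ?_
  induction e using Sym2.ind with
  | _ a b =>
    have hab : a ≠ b := by simpa using (mem_filter.1 he).2
    have hfiber : {p ∈ B.sigma (B.erase ·) | s(p.1, p.2) = s(a, b)} = {⟨a, b⟩, ⟨b, a⟩} := by
      ext ⟨x, y⟩
      simp only [mem_filter, mem_sigma, mem_erase, Sym2.eq_iff, mem_insert, mem_singleton,
        Sigma.mk.injEq, heq_eq_eq]
      have := mem_sym2_iff.1 (mem_filter.1 he).1
      aesop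
    rw [hfiber, sum_pair (by simp [hab]), Sym2.eq_swap, two_smul]

variable [Fintype α]

def permsAgreeingOn (s : Finset α) (f : α → α) : Finset (Perm α) :=
  {π | ∀ x ∈ s, π x = f x}

@[simp]
theorem mem_permsAgreeingOn {π : Perm α} : π ∈ permsAgreeingOn s f ↔ ∀ x ∈ s, π x = f x := by
  simp [permsAgreeingOn]

theorem permsAgreeingOn_eq_empty (hf : ¬Set.InjOn f s) : permsAgreeingOn s f = ∅ := by
  refine eq_empty_of_forall_notMem fun π hπ => hf fun x hx y hy hxy => π.injective ?_
  rw [mem_permsAgreeingOn] at hπ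
  rw [hπ x hx, hπ y hy, hxy]

theorem filter_apply_eq_permsAgreeingOn {b : α} (hb : b ∉ s) (y : α) :
    {π ∈ permsAgreeingOn s f | π b = y} = permsAgreeingOn (insert b s) (update f b y) := by
  have hupd (x) (hx : x ∈ s) : update f b y x = f x := update_of_ne (ne_of_mem_of_not_mem hx hb) y f
  ext π
  simp only [mem_filter, mem_permsAgreeingOn, forall_mem_insert, update_self]
  constructor
  · rintro ⟨hs, rfl⟩
    exact ⟨rfl, fun x hx => (hs x hx).trans (hupd x hx).symm⟩
  · rintro ⟨rfl, hs⟩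
    exact ⟨fun x hx => (hs x hx).trans (hupd x hx), rfl⟩

theorem card_permsAgreeingOn (hf : Set.InjOn f s) :
    #(permsAgreeingOn s f) = (Fintype.card α - #s)! := by
  obtain ⟨m, hm⟩ : ∃ m, Fintype.card α - #s = m := ⟨_, rfl⟩
  induction m generalizing s f with
  | zero =>
    obtain rfl : s = univ := eq_univ_of_card s (le_antisymm (card_le_univ s) (by omega))
    have hbij : Bijective f :=
      Finite.injective_iff_bijective.mp fun x y => hf (mem_coe.2 (mem_univ x)) (by simp)
    have hsingleton : permsAgreeingOn univ f = {Equiv.ofBijective f hbij} := by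
      ext π
      simp [Equiv.ext_iff]
    rw [hm, hsingleton, card_singleton, Nat.factorial_zero]
  | succ m ih =>
    obtain ⟨b, hb⟩ : ∃ b, b ∉ s := by
      by_contra! h
      rw [eq_univ_of_forall h, card_univ, Nat.sub_self] at hm
      omega
    have hfiber (y : α) :
        #{π ∈ permsAgreeingOn s f | π b = y} = if y ∈ s.image f then 0 else m ! := by
      rw [filter_apply_eq_permsAgreeingOn hb]
      split_ifs with hy
      · rw [permsAgreeingOn_eq_empty (by rw [injOn_insert_update hb]; tauto), card_empty]
      · have hcard : Fintype.card α - #(insert b s) = m := by rw [card_insert_of_notMem hb]; omega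
        rw [ih ((injOn_insert_update hb y).2 ⟨hf, hy⟩) hcard, hcard]
    have hfree : #(univ \ s.image f) = m + 1 := by
      rw [card_univ_sdiff, card_image_of_injOn hf, hm]
    rw [card_eq_sum_card_fiberwise (fun π _ => mem_univ (π b)), sum_congr rfl fun y _ => hfiber y,
      sum_ite, sum_const_zero, zero_add, sum_const, smul_eq_mul, ← sdiff_eq_filter, hfree, hm,
      Nat.factorial_succ]

theorem card_filter_apply_eq (hf : Set.InjOn f s) {b : α} (hb : b ∉ s) (y : α) :
    #{π ∈ permsAgreeingOn s f | π b = y} =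
      if y ∈ s.image f then 0 else (Fintype.card α - #s - 1)! := by
  rw [filter_apply_eq_permsAgreeingOn hb]
  split_ifs with hy
  · rw [permsAgreeingOn_eq_empty (by rw [injOn_insert_update hb]; tauto), card_empty]
  · rw [card_permsAgreeingOn ((injOn_insert_update hb y).2 ⟨hf, hy⟩), card_insert_of_notMem hb,
      Nat.sub_add_eq]

theorem sum_permsAgreeingOn_apply (hf : Set.InjOn f s) {b : α} (hb : b ∉ s) (g : α → M) :
    ∑ π ∈ permsAgreeingOn s f, g (π b) =
      (Fintype.card α - #s - 1)! • ∑ y ∈ univ \ s.image f, g y := by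
  refine (sum_fiberwise' _ (fun π : Perm α => π b) g).symm.trans ?_
  simp only [sum_const, card_filter_apply_eq hf hb, ite_smul, zero_smul, sum_ite, smul_zero,
    zero_add, ← sdiff_eq_filter, smul_sum]

theorem sum_permsAgreeingOn_apply_apply (hf : Set.InjOn f s) {a b : α} (ha : a ∉ s) (hb : b ∉ s)
    (hab : a ≠ b) (g : α → α → M) :
    ∑ π ∈ permsAgreeingOn s f, g (π a) (π b) =
      (Fintype.card α - #s - 2)! •
        ∑ x ∈ univ \ s.image f, ∑ y ∈ (univ \ s.image f).erase x, g x y := by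
  have hfiber (x : α) : ∑ π ∈ permsAgreeingOn s f with π a = x, g (π a) (π b) =
      if x ∈ s.image f then 0
      else (Fintype.card α - #s - 2)! • ∑ y ∈ (univ \ s.image f).erase x, g x y := by
    rw [sum_congr rfl fun π hπ => by rw [(mem_filter.1 hπ).2], filter_apply_eq_permsAgreeingOn ha]
    split_ifs with hx
    · rw [permsAgreeingOn_eq_empty (by rw [injOn_insert_update ha]; tauto), sum_empty]
    · have hupd : ∀ z ∈ s, update f a x z = f z := fun z hz =>
        update_of_ne (ne_of_mem_of_not_mem hz ha) x f
      rw [sum_permsAgreeingOn_apply ((injOn_insert_update ha x).2 ⟨hf, hx⟩)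
          (by simpa [hab.symm] using hb), card_insert_of_notMem ha, image_insert, update_self,
        image_congr hupd, sdiff_insert]
      congr 1
  rw [← sum_fiberwise _ (fun π => π a), sum_congr rfl fun x _ => hfiber x, sum_ite,
    sum_const_zero, zero_add, ← sdiff_eq_filter, smul_sum]

theorem sum_permsAgreeingOn_map_of_forall_mem {e : Sym2 α} (he : ∀ v ∈ e, v ∈ s) (g : Sym2 α → M) :
    ∑ π ∈ permsAgreeingOn s f, g (e.map π) = #(permsAgreeingOn s f) • g (e.map f) := by
  rw [sum_congr rfl fun π hπ => by
    rw [Sym2.map_congr fun v hv => mem_permsAgreeingOn.1 hπ v (he v hv)], sum_const]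

variable {K : Type*} [Field K] [CharZero K]

theorem sum_permsAgreeingOn_apply_eq_card_mul_div (hf : Set.InjOn f s) {b : α} (hb : b ∉ s)
    (g : α → K) :
    ∑ π ∈ permsAgreeingOn s f, g (π b) =
      #(permsAgreeingOn s f) * ((∑ y ∈ univ \ s.image f, g y) / #(univ \ s.image f)) := by
  have hfree : #(univ \ s.image f) = Fintype.card α - #s := by
    rw [card_univ_sdiff, card_image_of_injOn hf]
  have hpos : Fintype.card α - #s ≠ 0 := by have := card_lt_univ_of_notMem hb; omega
  rw [sum_permsAgreeingOn_apply hf hb, card_permsAgreeingOn hf, hfree,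
    ← Nat.mul_factorial_pred hpos, nsmul_eq_mul]
  push_cast
  field_simp

theorem sum_permsAgreeingOn_sym2_eq_card_mul_div (hf : Set.InjOn f s) {a b : α} (ha : a ∉ s)
    (hb : b ∉ s) (hab : a ≠ b) (g : Sym2 α → K) :
    ∑ π ∈ permsAgreeingOn s f, g s(π a, π b) =
      #(permsAgreeingOn s f) * ((∑ e ∈ (univ \ s.image f).sym2 with ¬e.IsDiag, g e) /
        (#(univ \ s.image f)).choose 2) := by
  have hfree : #(univ \ s.image f) = Fintype.card α - #s := by
    rw [card_univ_sdiff, card_image_of_injOn hf]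
  obtain ⟨t, ht⟩ : ∃ t, Fintype.card α - #s = t + 2 := by
    have := card_le_univ (insert a (insert b s))
    rw [card_insert_of_notMem (by simp [hab, ha]), card_insert_of_notMem hb] at this
    exact ⟨Fintype.card α - #s - 2, by omega⟩
  rw [sum_permsAgreeingOn_apply_apply hf ha hb hab fun x y => g s(x, y), sum_sum_erase_sym2_mk,
    card_permsAgreeingOn hf, hfree, ht, Nat.cast_choose_two, Nat.factorial_succ, Nat.factorial_succ, nsmul_eq_mul,
    nsmul_eq_mul]
  push_cast
  rw [add_sub_assoc, show (2 : K) - 1 = 1 by norm_num, add_assoc (t : K) 1 1, one_add_one_eq_two]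
  have : (t : K) + 2 ≠ 0 := by exact_mod_cast (t + 1).succ_ne_zero
  field_simp

end PermsAgreeingOn

section PrefixPerms

variable {n k : ℕ} {i : Fin k → Fin n}

abbrev prefixPerms (n k : ℕ) (i : Fin k → Fin n) : Finset (Perm (Fin n)) :=
  permsAgreeingOn {v | (v : ℕ) < k} (fixedEmb n k i)

theorem fixedEmb_castLE (hk : k ≤ n) (j : Fin k) : fixedEmb n k i (Fin.castLE hk j) = i j := by
  simp only [fixedEmb, Fin.val_castLE, j.isLt, dif_pos]

theorem filter_castLE_eq_prefixPerms (hk : k ≤ n) :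
    ({π | ∀ j : Fin k, π (Fin.castLE hk j) = i j} : Finset (Perm (Fin n))) = prefixPerms n k i := by
  ext π
  simp only [mem_permsAgreeingOn, mem_filter, mem_univ, true_and]
  constructor
  · intro h v hv
    simpa [fixedEmb, hv] using h ⟨v, hv⟩
  · intro h j
    simpa [fixedEmb_castLE] using h (Fin.castLE hk j) j.isLt

theorem injOn_fixedEmb (hi : Injective i) :
    Set.InjOn (fixedEmb n k i) ↑({v | (v : ℕ) < k} : Finset (Fin n)) := by
  intro a ha b hb hab
  simp only [coe_filter, mem_univ, true_and, Set.mem_ofPred_eq] at ha hb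
  simp only [fixedEmb, ha, hb, dif_pos] at hab
  exact Fin.ext (Fin.mk.inj_iff.1 (hi hab))

theorem image_fixedEmb (hk : k ≤ n) :
    ({v | (v : ℕ) < k} : Finset (Fin n)).image (fixedEmb n k i) = univ.image i := by
  ext y
  simp only [mem_image, mem_filter, mem_univ, true_and]
  constructor
  · rintro ⟨v, hv, rfl⟩
    exact ⟨⟨v, hv⟩, by simp [fixedEmb, hv]⟩
  · rintro ⟨j, rfl⟩
    exact ⟨Fin.castLE hk j, j.isLt, fixedEmb_castLE hk j⟩

theorem card_prefixPerms (hk : k ≤ n) (hi : Injective i) : #(prefixPerms n k i) = (n - k)! := by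
  rw [card_permsAgreeingOn (injOn_fixedEmb hi), Fintype.card_fin, Fin.card_filter_val_lt,
    min_eq_right hk]

theorem card_univ_sdiff_image (hi : Injective i) : #(univ \ univ.image i) = n - k := by
  rw [card_univ_sdiff, card_image_of_injective _ hi, card_univ, Fintype.card_fin, Fintype.card_fin]

theorem sum_sum_prefixPerms_map_of_forall_lt {R : Type*} [Semiring R] (hk : k ≤ n)
    (hi : Injective i) (E : Finset (Sym2 (Fin n))) (c : Sym2 (Fin n) → R) :
    ∑ e ∈ E with ∀ v : Fin n, v ∈ e → (v : ℕ) < k, ∑ π ∈ prefixPerms n k i, c (e.map π) =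
      (n - k)! * ∑ e ∈ E with ∀ v : Fin n, v ∈ e → (v : ℕ) < k, c (e.map (fixedEmb n k i)) := by
  rw [mul_sum]
  refine sum_congr rfl fun e he => ?_
  rw [sum_permsAgreeingOn_map_of_forall_mem (by simpa using (mem_filter.1 he).2),
    card_prefixPerms hk hi, nsmul_eq_mul]

variable {K : Type*} [Field K] [CharZero K]

theorem sum_prefixPerms_map_crossing (hk : k ≤ n) (hi : Injective i) (c : Sym2 (Fin n) → K)
    (j : Fin k) {v : Fin n} (hv : k ≤ (v : ℕ)) :
    ∑ π ∈ prefixPerms n k i, c (s(Fin.castLE hk j, v).map π) =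
      (n - k)! * ((∑ ℓ ∈ univ \ univ.image i, c s(i j, ℓ)) / #(univ \ univ.image i)) := by
  have hfixed (π) (hπ : π ∈ prefixPerms n k i) : π (Fin.castLE hk j) = i j := by
    rw [mem_permsAgreeingOn.1 hπ _ (by simp), fixedEmb_castLE]
  simp only [Sym2.map_mk]
  rw [sum_congr rfl fun π hπ => by rw [hfixed π hπ],
    sum_permsAgreeingOn_apply_eq_card_mul_div (injOn_fixedEmb hi) (by simpa using hv)
      fun y => c s(i j, y), image_fixedEmb hk, card_prefixPerms hk hi]

theorem sum_prefixPerms_map_of_forall_ge (hk : k ≤ n) (hi : Injective i) (c : Sym2 (Fin n) → K)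
    {e : Sym2 (Fin n)} (hdiag : ¬e.IsDiag) (he : ∀ v : Fin n, v ∈ e → k ≤ (v : ℕ)) :
    ∑ π ∈ prefixPerms n k i, c (e.map π) =
      (n - k)! * ((∑ e ∈ (⊤ : SimpleGraph (Fin n)).edgeFinset with
        ∀ v : Fin n, v ∈ e → v ∈ univ \ univ.image i, c e) / ((n - k).choose 2 : ℕ)) := by
  induction e using Sym2.ind with
  | _ a b =>
    simp only [Sym2.map_mk]
    simp only [Sym2.forall_mem_pair] at he
    rw [sum_permsAgreeingOn_sym2_eq_card_mul_div (injOn_fixedEmb hi) (by simpa using he.1)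
      (by simpa using he.2) (by simpa using hdiag), image_fixedEmb hk, card_prefixPerms hk hi,
      card_univ_sdiff_image hi]
    congr 3
    -- the two filters differ only in their decidability instances
    convert (SimpleGraph.filter_edgeFinset_top_forall_mem _).symm

theorem sum_sum_prefixPerms_map_crossing (hk : k ≤ n) (hi : Injective i)
    (G : SimpleGraph (Fin n)) [DecidableRel G.Adj] (c : Sym2 (Fin n) → K) :
    ∑ e ∈ G.edgeFinset with ¬(∀ v : Fin n, v ∈ e → (v : ℕ) < k) ∧
        ¬(∀ v : Fin n, v ∈ e → k ≤ (v : ℕ)), ∑ π ∈ prefixPerms n k i, c (e.map π) =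
      (n - k)! * ∑ j : Fin k,
        (∑ ℓ ∈ univ \ univ.image i, c s(i j, ℓ)) / #(univ \ univ.image i) *
          #{v ∈ G.neighborFinset (Fin.castLE hk j) | k ≤ v.val} := by
  rw [G.sum_edgeFinset_filter_crossing hk, mul_sum]
  refine sum_congr rfl fun j _ => ?_
  rw [sum_congr rfl fun v hv => sum_prefixPerms_map_crossing hk hi c j (mem_filter.1 hv).2,
    sum_const, nsmul_eq_mul]
  ring

theorem sum_sum_prefixPerms_map_of_forall_ge (hk : k ≤ n) (hi : Injective i)
    (G : SimpleGraph (Fin n)) [DecidableRel G.Adj] (c : Sym2 (Fin n) → K) :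
    ∑ e ∈ G.edgeFinset with ∀ v : Fin n, v ∈ e → k ≤ (v : ℕ), ∑ π ∈ prefixPerms n k i, c (e.map π) =
      (n - k)! * ((∑ e ∈ (⊤ : SimpleGraph (Fin n)).edgeFinset with
        ∀ v : Fin n, v ∈ e → v ∈ univ \ univ.image i, c e) / ((n - k).choose 2 : ℕ) *
          #{e ∈ G.edgeFinset | ∀ v : Fin n, v ∈ e → k ≤ (v : ℕ)}) := by
  rw [sum_congr rfl fun e he => sum_prefixPerms_map_of_forall_ge hk hi c
      (G.not_isDiag_of_mem_edgeSet (SimpleGraph.mem_edgeFinset.1 (mem_filter.1 he).1))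
      (mem_filter.1 he).2, sum_const, nsmul_eq_mul]
  ring

end PrefixPerms

theorem conditional_expectation_formula_general (n k : ℕ) (hk : k ≤ n)
    (c : Sym2 (Fin n) → ℝ)
    (F : SimpleGraph (Fin n)) [DecidableRel F.Adj]
    (i : Fin k → Fin n) (hi : Function.Injective i) :
    (1 / ((n - k).factorial : ℝ)) *
      ∑ π ∈ Finset.univ.filter
          (fun π : Equiv.Perm (Fin n) => ∀ j : Fin k, π (Fin.castLE hk j) = i j),
        ∑ e ∈ F.edgeFinset, c (e.map π)
    =
    (∑ e ∈ F.edgeFinset.filter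
        (fun e => ∀ v : Fin n, v ∈ e → (v : ℕ) < k), c (e.map (fixedEmb n k i)))
    + (∑ j : Fin k,
        ((∑ ℓ ∈ Finset.univ \ Finset.image i Finset.univ, c s(i j, ℓ)) /
            ((Finset.univ \ Finset.image i Finset.univ).card : ℝ)) *
          (((F.neighborFinset (Fin.castLE hk j)).filter
              (fun v : Fin n => k ≤ (v : ℕ))).card : ℝ))
    + ((∑ e ∈ (⊤ : SimpleGraph (Fin n)).edgeFinset.filter
            (fun e => ∀ v : Fin n, v ∈ e → v ∈ Finset.univ \ Finset.image i Finset.univ), c e) /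
          (((n - k).choose 2 : ℕ) : ℝ)) *
        ((F.edgeFinset.filter
            (fun e => ∀ v : Fin n, v ∈ e → k ≤ (v : ℕ))).card : ℝ) := by
  have hdisjoint (e : Sym2 (Fin n)) (_ : e ∈ F.edgeFinset) :
      ¬((∀ v : Fin n, v ∈ e → (v : ℕ) < k) ∧ ∀ v : Fin n, v ∈ e → k ≤ (v : ℕ)) :=
    fun h => (h.1 _ e.out_fst_mem).not_ge (h.2 _ e.out_fst_mem)
  rw [filter_castLE_eq_prefixPerms hk, sum_comm,
    F.edgeFinset.sum_eq_sum_filter_add_sum_filter_add _ _ hdisjoint,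
    sum_sum_prefixPerms_map_of_forall_lt hk hi, sum_sum_prefixPerms_map_of_forall_ge hk hi,
    sum_sum_prefixPerms_map_crossing hk hi]
  field_simp
  ring

/-- The explicit formula for the conditional expectation
`E[c(E(F_π)) ∣ (π(1), …, π(k)) = (i₁, …, i_k)]`: it equals
`c(F_π[{i₁,…,i_k}]) + ∑_{j=1}^k c̄({i_j ℓ : ℓ ∉ {i₁,…,i_k}})·|N_F(j) \ [k]|`
`+ c̄(K_n − {i₁,…,i_k})·m(F − [k])`. -/
theorem conditional_expectation_formula (n k : ℕ) (hk : k ≤ n)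
    (c : Sym2 (Fin n) → ℝ)
    (hc : ∀ e ∈ (⊤ : SimpleGraph (Fin n)).edgeFinset, c e = 1 ∨ c e = -1)
    (F : SimpleGraph (Fin n)) [DecidableRel F.Adj] (hF : F.IsAcyclic)
    (i : Fin k → Fin n) (hi : Function.Injective i) :
    (1 / ((n - k).factorial : ℝ)) *
      ∑ π ∈ Finset.univ.filter
          (fun π : Equiv.Perm (Fin n) => ∀ j : Fin k, π (Fin.castLE hk j) = i j),
        ∑ e ∈ F.edgeFinset, c (e.map π)
    =
    (∑ e ∈ F.edgeFinset.filter
        (fun e => ∀ v : Fin n, v ∈ e → (v : ℕ) < k), c (e.map (fixedEmb n k i)))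
    + (∑ j : Fin k,
        ((∑ ℓ ∈ Finset.univ \ Finset.image i Finset.univ, c s(i j, ℓ)) /
            ((Finset.univ \ Finset.image i Finset.univ).card : ℝ)) *
          (((F.neighborFinset (Fin.castLE hk j)).filter
              (fun v : Fin n => k ≤ (v : ℕ))).card : ℝ))
    + ((∑ e ∈ (⊤ : SimpleGraph (Fin n)).edgeFinset.filter
            (fun e => ∀ v : Fin n, v ∈ e → v ∈ Finset.univ \ Finset.image i Finset.univ), c e) /
          (((n - k).choose 2 : ℕ) : ℝ)) *
        ((F.edgeFinset.filter
            (fun e => ∀ v : Fin n, v ∈ e → k ≤ (v : ℕ))).card : ℝ) :=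
  conditional_expectation_formula_general n k hk c F i hi
end

section
/- Let H be a spanning subgraph of K_n and c : E(K_n) → {−1,1}. Then ∑_{uv} c(δ_H(uv)), summed over all unordered pairs uv of distinct vertices, equals ∑_{uv ∈ E(H)} (2n−4)·c(uv), where δ_H(uv) is the set of edges of H between {u,v} and (N_H(u) ∪ N_H(v)) \ {u,v}. -/
/-!
Exchanging the order of summation, each edge `e` of `H` contributes `c e` once for every pair
`u < v` that `e` separates, i.e. that has exactly one vertex in common with `e`. Orienting such a
pair from its endpoint in `e` to the other one identifies these pairs with `e × (V \ e)`, so there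
are `2 (n - 2)` of them.
-/

open Finset

theorem sum_sum_filter_sum_filter_eq_sum_card_smul {ι κ M : Type*} [Fintype ι] [AddCommMonoid M]
    (R : ι → ι → Prop) [DecidableRel R] (P : ι → ι → κ → Prop) [∀ i j, DecidablePred (P i j)]
    (s : Finset κ) (c : κ → M) :
    ∑ i, ∑ j ∈ univ.filter (R i), ∑ e ∈ s.filter (P i j), c e
      = ∑ e ∈ s, #{x : ι × ι | R x.1 x.2 ∧ P x.1 x.2 e} • c e := by
  rw [← sum_finset_product' {x : ι × ι | R x.1 x.2} _ _ (by simp)]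
  simp_rw [← sum_const]
  exact sum_comm' (by simp; tauto)

theorem card_filter_lt_xor_mem {α : Type*} [Fintype α] [LinearOrder α] (s : Finset α) :
    #{x : α × α | x.1 < x.2 ∧ Xor (x.1 ∈ s) (x.2 ∈ s)} = #s * #sᶜ := by
  rw [← card_product]
  refine card_nbij' (fun x => if x.1 ∈ s then x else x.swap)
    (fun x => if x.1 < x.2 then x else x.swap) ?_ ?_ ?_ ?_ <;>
  · rintro ⟨a, b⟩ h
    simp only [coe_filter, coe_product, coe_compl, Set.mem_ofPred_eq, Set.mem_prod,
      Set.mem_compl_iff, mem_coe] at h ⊢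
    grind

theorem card_filter_lt_separated {α : Type*} [Fintype α] [LinearOrder α] {e : Sym2 α}
    (he : ¬e.IsDiag) :
    #{x : α × α | x.1 < x.2 ∧ ((x.1 ∈ e ∨ x.2 ∈ e) ∧ ¬(x.1 ∈ e ∧ x.2 ∈ e))}
      = 2 * (Fintype.card α - 2) := by
  simp_rw [← xor_iff_or_and_not_and, ← Sym2.mem_toFinset]
  rw [card_filter_lt_xor_mem, card_compl, Sym2.card_toFinset_of_not_isDiag e he]

theorem deltaSum_identity_general (n : ℕ) (H : SimpleGraph (Fin n)) [DecidableRel H.Adj]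
    (c : Sym2 (Fin n) → ℝ) :
    ∑ u : Fin n, ∑ v ∈ Finset.univ.filter (fun v : Fin n => u < v),
      ∑ e ∈ H.edgeFinset.filter (fun e => (u ∈ e ∨ v ∈ e) ∧ ¬(u ∈ e ∧ v ∈ e)), c e
    = ∑ e ∈ H.edgeFinset, (2 * (n : ℝ) - 4) * c e := by
  rw [sum_sum_filter_sum_filter_eq_sum_card_smul]
  refine sum_congr rfl fun e he => ?_
  have hdiag : ¬e.IsDiag := H.not_isDiag_of_mem_edgeSet (SimpleGraph.mem_edgeFinset.mp he)
  have hn : 2 ≤ n := by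
    simpa using (Sym2.card_toFinset_of_not_isDiag e hdiag).symm.trans_le (card_le_univ _)
  rw [card_filter_lt_separated hdiag, Fintype.card_fin, nsmul_eq_mul]
  push_cast [hn]
  ring

/-- For a spanning subgraph `H` of `K_n` and `c : E(K_n) → {−1, 1}`, the sum over all
unordered pairs `uv` of distinct vertices of `c(δ_H(uv))` equals `∑_{uv ∈ E(H)} (2n−4)·c(uv)`,
where `δ_H(uv)` is the set of edges of `H` between `{u,v}` and `(N_H(u) ∪ N_H(v)) \ {u,v}`,
i.e. the edges of `H` with exactly one endpoint in `{u, v}`. -/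
theorem deltaSum_identity (n : ℕ) (H : SimpleGraph (Fin n)) [DecidableRel H.Adj]
    (c : Sym2 (Fin n) → ℝ)
    (hc : ∀ e ∈ (⊤ : SimpleGraph (Fin n)).edgeFinset, c e = 1 ∨ c e = -1) :
    ∑ u : Fin n, ∑ v ∈ Finset.univ.filter (fun v : Fin n => u < v),
      ∑ e ∈ H.edgeFinset.filter (fun e => (u ∈ e ∨ v ∈ e) ∧ ¬(u ∈ e ∧ v ∈ e)), c e
    = ∑ e ∈ H.edgeFinset, (2 * (n : ℝ) - 4) * c e :=
  deltaSum_identity_general n H c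
end

section
/- Let H be a spanning subgraph of K_n, c : E(K_n) → {−1,1}, and for distinct vertices u,v let H_{uv} be the copy of H obtained by exchanging the roles of u and v. Then ∑_{uv} c(δ_{H_{uv}}(uv)), summed over all unordered pairs uv, equals ∑_{uv ∉ E(H)} (d_H(u)+d_H(v))·c(uv) + ∑_{uv ∈ E(H)} (d_H(u)+d_H(v)−2)·c(uv). -/
/-- `swapGraph H u v` is the isomorphic copy `H_{uv}` of `H` in which the vertices `u` and `v`
have exchanged their roles. -/
def swapGraph {V : Type*} [DecidableEq V] (H : SimpleGraph V) (u v : V) : SimpleGraph V where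
  Adj a b := H.Adj (Equiv.swap u v a) (Equiv.swap u v b)
  symm := ⟨fun a b h => H.adj_symm h⟩
  loopless := ⟨fun a h => H.irrefl h⟩

instance {V : Type*} [DecidableEq V] (H : SimpleGraph V) [DecidableRel H.Adj] (u v : V) :
    DecidableRel (swapGraph H u v).Adj :=
  fun a b => inferInstanceAs (Decidable (H.Adj (Equiv.swap u v a) (Equiv.swap u v b)))

/-- The sum of the degrees (in `H`) of the two endpoints of an edge `e`. -/
noncomputable def degSum (n : ℕ) (H : SimpleGraph (Fin n)) [DecidableRel H.Adj]
    (e : Sym2 (Fin n)) : ℝ :=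
  Sym2.lift ⟨fun a b => (H.degree a : ℝ) + (H.degree b : ℝ), fun a b => by ring⟩ e

/-! For `u ≠ v`, the edges of `H_{uv}` with exactly one end in `{u, v}` are the edges `uw` with
`w ≠ u` a neighbour of `v` in `H`, and the edges `vw` with `w ≠ v` a neighbour of `u`. Summing
over unordered pairs `uv` therefore sums `c(uw)` over the ordered triples `(u, v, w)` of distinct
vertices with `vw ∈ E(H)`. For fixed `(u, w)` there are `d_H(w) − [uw ∈ E(H)]` choices of `v`,
and symmetrising in `u, w` gives `c(uw)` the coefficient `d_H(u) + d_H(w) − 2 [uw ∈ E(H)]`. -/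

open Finset SimpleGraph

section
variable {ι M : Type*} [Fintype ι] [LinearOrder ι] [AddCommMonoid M]

theorem Finset.sum_lt_add_swap (f : ι → ι → M) :
    ∑ u, ∑ v with u < v, (f u v + f v u) = ∑ u, ∑ v ∈ univ.erase u, f u v := by
  have hswap : ∑ u, ∑ v with u < v, f v u = ∑ u, ∑ v with v < u, f u v :=
    sum_comm' fun _ _ => by simp
  have hsplit (u : ι) :
      ∑ v ∈ univ.erase u, f u v = ∑ v with u < v, f u v + ∑ v with v < u, f u v := by
    rw [← sum_filter_add_sum_filter_not (univ.erase u) (u < ·), filter_erase, filter_erase]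
    congr 1
    · exact sum_congr (by ext; simp) fun _ _ => rfl
    · exact sum_congr (by ext; simp; grind) fun _ _ => rfl
  simp only [sum_add_distrib, hswap, hsplit]

theorem SimpleGraph.sum_edgeFinset_top (F : Sym2 ι → M) :
    ∑ e ∈ (⊤ : SimpleGraph ι).edgeFinset, F e = ∑ u, ∑ v with u < v, F s(u, v) := by
  have hoff : univ.offDiag.filter (fun p : ι × ι => p.1 < p.2)
      = univ.filter (fun p => p.1 < p.2) := by
    ext p; simpa using ne_of_lt
  calc ∑ e ∈ (⊤ : SimpleGraph ι).edgeFinset, F e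
        = ∑ e ∈ univ.sym2 with ¬ e.IsDiag, F e := by congr 1; ext e; simp
    _ = ∑ p ∈ univ.filter (fun p : ι × ι => p.1 < p.2), F s(p.1, p.2) := by
        rw [sum_sym2_filter_not_isDiag, hoff]
    _ = _ := by rw [sum_filter, Fintype.sum_prod_type]; simp only [sum_filter]

end

namespace SimpleGraph
variable {V M : Type*} [DecidableEq V]

@[simp]
theorem swapGraph_adj (H : SimpleGraph V) {u v a b : V} :
    (swapGraph H u v).Adj a b ↔ H.Adj (Equiv.swap u v a) (Equiv.swap u v b) :=
  Iff.rfl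

variable [Fintype V]

theorem neighborFinset_swapGraph_left_erase (H : SimpleGraph V) [DecidableRel H.Adj] (u v : V) :
    ((swapGraph H u v).neighborFinset u).erase v = (H.neighborFinset v).erase u := by
  ext w
  simp only [mem_erase, mem_neighborFinset, swapGraph_adj, Equiv.swap_apply_left,
    Equiv.swap_apply_def]
  split_ifs <;> subst_vars <;> simp_all

theorem neighborFinset_swapGraph_right_erase (H : SimpleGraph V) [DecidableRel H.Adj] (u v : V) :
    ((swapGraph H u v).neighborFinset v).erase u = (H.neighborFinset u).erase v := by
  ext w
  simp only [mem_erase, mem_neighborFinset, swapGraph_adj, Equiv.swap_apply_right,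
    Equiv.swap_apply_def]
  split_ifs <;> subst_vars <;> simp_all

theorem sum_edgeFinset_filter_mem_xor [AddCommMonoid M] (G : SimpleGraph V) [DecidableRel G.Adj]
    {u v : V} (huv : u ≠ v) (c : Sym2 V → M) :
    ∑ e ∈ G.edgeFinset with (u ∈ e ∨ v ∈ e) ∧ ¬(u ∈ e ∧ v ∈ e), c e
      = ∑ w ∈ (G.neighborFinset u).erase v, c s(u, w)
        + ∑ w ∈ (G.neighborFinset v).erase u, c s(v, w) := by
  have hdisj : Disjoint (((G.neighborFinset u).erase v).image (s(u, ·)))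
      (((G.neighborFinset v).erase u).image (s(v, ·))) := by
    rw [Finset.disjoint_left]
    simp only [mem_image, mem_erase, not_exists, not_and]
    rintro _ ⟨x, ⟨hxv, -⟩, rfl⟩ y ⟨hyu, -⟩ hxy
    rcases Sym2.eq_iff.mp hxy with ⟨h, -⟩ | ⟨h, -⟩ <;> simp_all
  rw [← sum_image fun _ _ _ _ => Sym2.congr_right.mp,
    ← sum_image fun _ _ _ _ => Sym2.congr_right.mp, ← sum_union hdisj]
  refine sum_congr ?_ fun _ _ => rfl
  ext e
  induction e using Sym2.ind with
  | _ a b =>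
    simp only [mem_filter, mem_edgeFinset, mem_edgeSet, mem_union, mem_image, mem_erase,
      mem_neighborFinset, Sym2.mem_iff, Sym2.eq_iff]
    grind [G.adj_comm]

theorem sum_sum_neighborFinset_erase [AddCommMonoid M] (G : SimpleGraph V) [DecidableRel G.Adj]
    (u : V) (f : V → M) :
    ∑ v ∈ univ.erase u, ∑ w ∈ (G.neighborFinset v).erase u, f w
      = ∑ w ∈ univ.erase u, #((G.neighborFinset w).erase u) • f w := by
  rw [sum_comm' (t' := univ.erase u) (s' := fun w => (G.neighborFinset w).erase u)]
  · simp only [sum_const]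
  · intro v w
    simp only [mem_erase, mem_univ, mem_neighborFinset, G.adj_comm v w]
    tauto

theorem cast_card_neighborFinset_erase {R : Type*} [AddGroupWithOne R] (G : SimpleGraph V)
    [DecidableRel G.Adj] (u w : V) :
    (#((G.neighborFinset w).erase u) : R) = G.degree w - if G.Adj w u then 1 else 0 := by
  split_ifs with h
  · rw [cast_card_erase_of_mem ((G.mem_neighborFinset w u).mpr h), card_neighborFinset_eq_degree]
  · rw [erase_eq_of_notMem (by simpa using h), card_neighborFinset_eq_degree, sub_zero]

theorem cast_card_neighborFinset_erase_add {R : Type*} [AddCommGroupWithOne R] (G : SimpleGraph V)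
    [DecidableRel G.Adj] (u w : V) :
    (#((G.neighborFinset w).erase u) + #((G.neighborFinset u).erase w) : R)
      = G.degree u + G.degree w - if G.Adj u w then 2 else 0 := by
  simp only [cast_card_neighborFinset_erase, G.adj_comm w u]
  split_ifs
  · rw [← one_add_one_eq_two]; abel
  · abel

end SimpleGraph

theorem degSum_mk (n : ℕ) (H : SimpleGraph (Fin n)) [DecidableRel H.Adj] (u w : Fin n) :
    degSum n H s(u, w) = H.degree u + H.degree w :=
  rfl

theorem swapped_deltaSum_identity_general (n : ℕ) (H : SimpleGraph (Fin n)) [DecidableRel H.Adj]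
    (c : Sym2 (Fin n) → ℝ) :
    ∑ u : Fin n, ∑ v ∈ Finset.univ.filter (fun v : Fin n => u < v),
      ∑ e ∈ (swapGraph H u v).edgeFinset.filter
          (fun e => (u ∈ e ∨ v ∈ e) ∧ ¬(u ∈ e ∧ v ∈ e)), c e
    = (∑ e ∈ (⊤ : SimpleGraph (Fin n)).edgeFinset \ H.edgeFinset, degSum n H e * c e)
      + ∑ e ∈ H.edgeFinset, (degSum n H e - 2) * c e := by
  set g : Fin n → Fin n → ℝ := fun u w => #((H.neighborFinset w).erase u) • c s(u, w)
  set F : Sym2 (Fin n) → ℝ :=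
    fun e => (degSum n H e - if e ∈ H.edgeFinset then 2 else 0) * c e
  calc _ = ∑ u, ∑ v with u < v, (∑ w ∈ (H.neighborFinset v).erase u, c s(u, w)
          + ∑ w ∈ (H.neighborFinset u).erase v, c s(v, w)) := by
        refine sum_congr rfl fun u _ => sum_congr rfl fun v hv => ?_
        rw [sum_edgeFinset_filter_mem_xor _ (mem_filter.mp hv).2.ne,
          neighborFinset_swapGraph_left_erase, neighborFinset_swapGraph_right_erase]
    _ = ∑ u, ∑ v ∈ univ.erase u, ∑ w ∈ (H.neighborFinset v).erase u, c s(u, w) :=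
        sum_lt_add_swap _
    _ = ∑ u, ∑ w ∈ univ.erase u, g u w := by simp only [sum_sum_neighborFinset_erase, g]
    _ = ∑ u, ∑ w with u < w, (g u w + g w u) := (sum_lt_add_swap g).symm
    _ = ∑ u, ∑ w with u < w, F s(u, w) := by
        refine sum_congr rfl fun u _ => sum_congr rfl fun w _ => ?_
        simp only [g, F, nsmul_eq_mul, Sym2.eq_swap (a := w), ← add_mul,
          cast_card_neighborFinset_erase_add, degSum_mk, mem_edgeFinset, mem_edgeSet]
    _ = ∑ e ∈ (⊤ : SimpleGraph (Fin n)).edgeFinset, F e := (sum_edgeFinset_top F).symm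
    _ = _ := by
        rw [← sum_sdiff (edgeFinset_mono (le_top : H ≤ ⊤))]
        congr 1 <;> refine sum_congr rfl fun e he => ?_ <;> simp_all [F]

/-- `∑_{uv} c(δ_{H_{uv}}(uv))`, summed over all unordered pairs of distinct vertices, equals
`∑_{uv ∉ E(H)} (d_H(u)+d_H(v))·c(uv) + ∑_{uv ∈ E(H)} (d_H(u)+d_H(v)−2)·c(uv)`. -/
theorem swapped_deltaSum_identity (n : ℕ) (H : SimpleGraph (Fin n)) [DecidableRel H.Adj]
    (c : Sym2 (Fin n) → ℝ)
    (hc : ∀ e ∈ (⊤ : SimpleGraph (Fin n)).edgeFinset, c e = 1 ∨ c e = -1) :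
    ∑ u : Fin n, ∑ v ∈ Finset.univ.filter (fun v : Fin n => u < v),
      ∑ e ∈ (swapGraph H u v).edgeFinset.filter
          (fun e => (u ∈ e ∨ v ∈ e) ∧ ¬(u ∈ e ∧ v ∈ e)), c e
    = (∑ e ∈ (⊤ : SimpleGraph (Fin n)).edgeFinset \ H.edgeFinset, degSum n H e * c e)
      + ∑ e ∈ H.edgeFinset, (degSum n H e - 2) * c e :=
  swapped_deltaSum_identity_general n H c
end
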